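/- arXiv:2205.00114 — 2 statements merged into one kernel-verified Lean document; each statement's English description precedes it below -/
import Mathlib

section
/- A nonzero element x of the ring R̄ of Colombeau generalized real numbers is either invertible or a zero divisor. More precisely, if x is not invertible then there exists an idempotent e ∈ R̄ with e ≠ 0 and e ≠ 1 such that e·x = 0. -/
/-!
If `x` is not invertible, no power `ε ^ n` bounds `|x ε|` from below near `0`, so for each `k`
there are arbitrarily small `ε` with `|x ε| < ε ^ k`. Picking one such `t k → 0` for every `k`,
the set `S = {t k}` accumulates at `0`, and so does its complement because `S` is countable.
Hence `e = [χ_S]` is an idempotent other than `0` and `1`, and `e * x` is negligible because the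
points of `S` close to `0` are the `t k` with `k` large.
-/

noncomputable section

open Real

/-- `P ε` holds for all sufficiently small `ε ∈ (0,1]`. -/
def SmallEv (P : ℝ → Prop) : Prop :=
  ∃ η : ℝ, 0 < η ∧ ∀ ε : ℝ, 0 < ε → ε ≤ η → P ε

/-- A net `x : (0,1] → ℝ` (modeled on all of `ℝ`) is moderate. -/
def Moderate (x : ℝ → ℝ) : Prop :=
  ∃ r : ℝ, SmallEv fun ε => |x ε| < ε ^ r

/-- A net is negligible. -/
def Negligible (x : ℝ → ℝ) : Prop :=
  ∀ n : ℕ, SmallEv fun ε => |x ε| < ε ^ (n : ℝ)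

lemma smallEv_and {P Q : ℝ → Prop} (hP : SmallEv P) (hQ : SmallEv Q) :
    SmallEv fun ε => P ε ∧ Q ε := by
  obtain ⟨a, ha, hP⟩ := hP
  obtain ⟨b, hb, hQ⟩ := hQ
  exact ⟨min a b, lt_min ha hb, fun ε hε hle =>
    ⟨hP ε hε (hle.trans (min_le_left _ _)), hQ ε hε (hle.trans (min_le_right _ _))⟩⟩

lemma moderate_zero : Moderate (0 : ℝ → ℝ) :=
  ⟨0, 1, one_pos, fun ε hε _ => by simp⟩

lemma moderate_one : Moderate (1 : ℝ → ℝ) := by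
  refine ⟨-1, 1/2, by norm_num, fun ε hε hle => ?_⟩
  have h1 : ε < 1 := lt_of_le_of_lt hle (by norm_num)
  show |(1 : ℝ → ℝ) ε| < ε ^ (-1 : ℝ)
  rw [Real.rpow_neg_one]
  simpa using (one_lt_inv₀ hε).mpr h1

lemma moderate_neg {x : ℝ → ℝ} (hx : Moderate x) : Moderate (-x) := by
  obtain ⟨r, η, hη, h⟩ := hx
  exact ⟨r, η, hη, fun ε hε hle => by simpa using h ε hε hle⟩

lemma moderate_add {x y : ℝ → ℝ} (hx : Moderate x) (hy : Moderate y) :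
    Moderate (x + y) := by
  obtain ⟨r, hr⟩ := hx
  obtain ⟨s, hs⟩ := hy
  obtain ⟨η, hη, h⟩ := smallEv_and hr hs
  refine ⟨min r s - 1, min η (1/2), lt_min hη (by norm_num), fun ε hε hle => ?_⟩
  have hεhalf : ε ≤ 1/2 := hle.trans (min_le_right _ _)
  have hε1 : ε ≤ 1 := hεhalf.trans (by norm_num)
  obtain ⟨h1, h2⟩ := h ε hε (hle.trans (min_le_left _ _))
  have h2inv : (2 : ℝ) ≤ ε⁻¹ := by
    rw [le_inv_comm₀ (by norm_num) hε]
    linarith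
  calc |(x + y) ε| ≤ |x ε| + |y ε| := abs_add_le _ _
    _ < ε ^ r + ε ^ s := add_lt_add h1 h2
    _ ≤ ε ^ min r s + ε ^ min r s :=
        add_le_add (Real.rpow_le_rpow_of_exponent_ge hε hε1 (min_le_left _ _))
          (Real.rpow_le_rpow_of_exponent_ge hε hε1 (min_le_right _ _))
    _ = 2 * ε ^ min r s := by ring
    _ ≤ ε⁻¹ * ε ^ min r s :=
        mul_le_mul_of_nonneg_right h2inv (Real.rpow_nonneg hε.le _)
    _ = ε ^ (min r s - 1) := by
        rw [← Real.rpow_neg_one ε, ← Real.rpow_add hε]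
        ring_nf

lemma moderate_mul {x y : ℝ → ℝ} (hx : Moderate x) (hy : Moderate y) :
    Moderate (x * y) := by
  obtain ⟨r, hr⟩ := hx
  obtain ⟨s, hs⟩ := hy
  obtain ⟨η, hη, h⟩ := smallEv_and hr hs
  refine ⟨r + s, η, hη, fun ε hε hle => ?_⟩
  obtain ⟨h1, h2⟩ := h ε hε hle
  have : |(x * y) ε| = |x ε| * |y ε| := by simp [abs_mul]
  rw [this, Real.rpow_add hε]
  exact mul_lt_mul'' h1 h2 (abs_nonneg _) (abs_nonneg _)

/-- The ring `E_M` of moderate nets, as a subring of `ℝ → ℝ`. -/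
def EMring : Subring (ℝ → ℝ) where
  carrier := {x | Moderate x}
  mul_mem' := moderate_mul
  one_mem' := moderate_one
  add_mem' := moderate_add
  zero_mem' := moderate_zero
  neg_mem' := moderate_neg

lemma negligible_zero : Negligible (0 : ℝ → ℝ) := fun n =>
  ⟨1, one_pos, fun ε hε _ => by simpa using Real.rpow_pos_of_pos hε (n : ℝ)⟩

lemma negligible_add {x y : ℝ → ℝ} (hx : Negligible x) (hy : Negligible y) :
    Negligible (x + y) := by
  intro n
  obtain ⟨η, hη, h⟩ := smallEv_and (hx (n + 1)) (hy (n + 1))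
  refine ⟨min η (1/2), lt_min hη (by norm_num), fun ε hε hle => ?_⟩
  have hεhalf : ε ≤ 1/2 := hle.trans (min_le_right _ _)
  obtain ⟨h1, h2⟩ := h ε hε (hle.trans (min_le_left _ _))
  have hcast : ((n + 1 : ℕ) : ℝ) = (n : ℝ) + 1 := by push_cast; ring
  have hsplit : ε ^ ((n + 1 : ℕ) : ℝ) = ε ^ (n : ℝ) * ε := by
    rw [hcast, Real.rpow_add hε, Real.rpow_one]
  calc |(x + y) ε| ≤ |x ε| + |y ε| := abs_add_le _ _
    _ < ε ^ ((n + 1 : ℕ) : ℝ) + ε ^ ((n + 1 : ℕ) : ℝ) := add_lt_add h1 h2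
    _ = (2 * ε) * ε ^ (n : ℝ) := by rw [hsplit]; ring
    _ ≤ 1 * ε ^ (n : ℝ) := by
        apply mul_le_mul_of_nonneg_right _ (Real.rpow_nonneg hε.le _)
        linarith
    _ = ε ^ (n : ℝ) := one_mul _

lemma negligible_smul {x y : ℝ → ℝ} (hx : Moderate x) (hy : Negligible y) :
    Negligible (x * y) := by
  intro n
  obtain ⟨r, hr⟩ := hx
  set k : ℕ := n + Nat.ceil (max 0 (-r)) with hk
  obtain ⟨η, hη, h⟩ := smallEv_and hr (hy k)
  refine ⟨min η 1, lt_min hη one_pos, fun ε hε hle => ?_⟩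
  have hε1 : ε ≤ 1 := hle.trans (min_le_right _ _)
  obtain ⟨h1, h2⟩ := h ε hε (hle.trans (min_le_left _ _))
  have hexp : (n : ℝ) ≤ r + (k : ℝ) := by
    have h1' : (-r) ≤ (Nat.ceil (max 0 (-r)) : ℝ) :=
      le_trans (le_max_right 0 (-r)) (Nat.le_ceil _)
    have : (k : ℝ) = (n : ℝ) + (Nat.ceil (max 0 (-r)) : ℝ) := by
      rw [hk]; push_cast; ring
    linarith
  show |(x * y) ε| < ε ^ (n : ℝ)
  have hxy : |(x * y) ε| = |x ε| * |y ε| := by simp [abs_mul]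
  rw [hxy]
  calc |x ε| * |y ε| < ε ^ r * ε ^ (k : ℝ) :=
        mul_lt_mul'' h1 h2 (abs_nonneg _) (abs_nonneg _)
    _ = ε ^ (r + (k : ℝ)) := (Real.rpow_add hε _ _).symm
    _ ≤ ε ^ (n : ℝ) := Real.rpow_le_rpow_of_exponent_ge hε hε1 hexp

/-- The ideal of negligible nets inside `E_M`. -/
def NegIdeal : Ideal EMring where
  carrier := {x | Negligible x.1}
  add_mem' := fun hx hy => negligible_add hx hy
  zero_mem' := negligible_zero
  smul_mem' := fun c _ hx => negligible_smul c.2 hx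

/-- The ring of Colombeau generalized real numbers. -/
abbrev Rbar := EMring ⧸ NegIdeal

/-- Class of a moderate net in `R̄`. -/
def mkR (x : EMring) : Rbar := Ideal.Quotient.mk NegIdeal x

/-- The valuation `V` on the quotient. -/
def VQ (x : Rbar) : ℝ :=
  sSup {r : ℝ | ∃ x' : EMring, mkR x' = x ∧ SmallEv fun ε => |x'.1 ε| < ε ^ r}

open Classical in
/-- sharp norm on `R̄`. -/
def normQ (x : Rbar) : ℝ := if x = 0 then 0 else Real.exp (-(VQ x))

/-- sharp distance on `R̄`. -/
def sharpDist (x y : Rbar) : ℝ := normQ (x - y)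

/-- `x` is nonnegative: it has a representative which is nonnegative on `(0,1]`. -/
def NonnegQ (x : Rbar) : Prop :=
  ∃ x' : EMring, mkR x' = x ∧ ∀ ε : ℝ, 0 < ε → ε ≤ 1 → 0 ≤ x'.1 ε

/-- `x` belongs to `V_r(0)`: some representative satisfies `|x_ε| < ε^r` eventually. -/
def InVr (r : ℝ) (x : Rbar) : Prop :=
  ∃ x' : EMring, mkR x' = x ∧ SmallEv fun ε => |x'.1 ε| < ε ^ r

/-- `x ≥ α^m`: some representative satisfies `x_ε ≥ ε^m` eventually. -/
def GeAlpha (m : ℝ) (x : Rbar) : Prop :=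
  ∃ x' : EMring, mkR x' = x ∧ SmallEv fun ε => ε ^ m ≤ x'.1 ε

lemma idNet_moderate : Moderate (fun ε : ℝ => ε) := by
  refine ⟨0, 1/2, by norm_num, fun ε hε hle => ?_⟩
  show |ε| < ε ^ (0 : ℝ)
  rw [Real.rpow_zero, abs_of_pos hε]
  linarith

/-- The generalized number `α = [ε ↦ ε]`. -/
def alphaQ : Rbar := mkR ⟨fun ε => ε, idNet_moderate⟩

lemma chi_moderate (S : Set ℝ) : Moderate (S.indicator fun _ => (1 : ℝ)) := by
  refine ⟨-1, 1/2, by norm_num, fun ε hε hle => ?_⟩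
  have h1 : ε < 1 := lt_of_le_of_lt hle (by norm_num)
  have hlt : (1 : ℝ) < ε ^ (-1 : ℝ) := by
    rw [Real.rpow_neg_one]
    exact (one_lt_inv₀ hε).mpr h1
  by_cases h : ε ∈ S <;> simp [Set.indicator, h] <;> linarith [hlt]

/-- Hypernatural numbers: moderate nets with values in `ℕ`. -/
def HyperNat : Type := {f : ℝ → ℕ // Moderate fun ε => (f ε : ℝ)}

/-- Strict order on hypernaturals: eventually pointwise. -/
def HNlt (m n : HyperNat) : Prop := SmallEv fun ε => m.1 ε < n.1 ε


open Filter Topology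

lemma smallEv_iff {P : ℝ → Prop} : SmallEv P ↔ ∀ᶠ ε in 𝓝[>] (0 : ℝ), P ε := by
  rw [Filter.Eventually, mem_nhdsGT_iff_exists_Ioc_subset]
  exact ⟨fun ⟨η, hη, h⟩ => ⟨η, hη, fun ε hε => h ε hε.1 hε.2⟩,
    fun ⟨η, hη, h⟩ => ⟨η, hη, fun ε hε hle => h ⟨hε, hle⟩⟩⟩

lemma negligible_iff {x : ℝ → ℝ} :
    Negligible x ↔ ∀ n : ℕ, ∀ᶠ ε in 𝓝[>] (0 : ℝ), |x ε| < ε ^ (n : ℝ) := by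
  simp only [Negligible, smallEv_iff]

lemma negligible_of_eventually_eq_zero {x : ℝ → ℝ} (h : ∀ᶠ ε in 𝓝[>] (0 : ℝ), x ε = 0) :
    Negligible x := by
  refine negligible_iff.2 fun n => ?_
  filter_upwards [h, self_mem_nhdsWithin] with ε hx hε
  simpa [hx] using Real.rpow_pos_of_pos hε (n : ℝ)

lemma not_negligible_of_frequently_one_le_abs {x : ℝ → ℝ}
    (h : ∃ᶠ ε in 𝓝[>] (0 : ℝ), 1 ≤ |x ε|) : ¬ Negligible x := by
  intro hx
  obtain ⟨ε, hle, hlt⟩ := (h.and_eventually (negligible_iff.1 hx 0)).exists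
  simp only [Nat.cast_zero, Real.rpow_zero] at hlt
  linarith

lemma mkR_surjective : Function.Surjective mkR := Ideal.Quotient.mk_surjective

lemma mkR_one : mkR 1 = 1 := map_one _

lemma mkR_mul (u v : EMring) : mkR (u * v) = mkR u * mkR v := map_mul _ u v

lemma mkR_eq_mkR_iff {u v : EMring} : mkR u = mkR v ↔ Negligible (u - v).1 :=
  Ideal.Quotient.eq

lemma mkR_eq_zero_iff {v : EMring} : mkR v = 0 ↔ Negligible v.1 :=
  Ideal.Quotient.eq_zero_iff_mem

/-- The inverse is the pointwise `(x ε)⁻¹`, a total net since `0⁻¹ = 0`. -/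
lemma isUnit_mkR_of_eventually_pow_le_abs (x : EMring) (n : ℕ)
    (h : ∀ᶠ ε in 𝓝[>] (0 : ℝ), ε ^ (n : ℝ) ≤ |x.1 ε|) : IsUnit (mkR x) := by
  have hne : ∀ᶠ ε in 𝓝[>] (0 : ℝ), x.1 ε ≠ 0 := by
    filter_upwards [h, self_mem_nhdsWithin] with ε hle hε hx
    simp only [hx, abs_zero] at hle
    exact (Real.rpow_pos_of_pos hε _).not_ge hle
  have hinv : Moderate fun ε => (x.1 ε)⁻¹ := by
    refine ⟨-(n : ℝ) - 1, smallEv_iff.2 ?_⟩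
    filter_upwards [h, self_mem_nhdsWithin, Ioo_mem_nhdsGT one_pos] with ε hle hε hε1
    have hpow := Real.rpow_pos_of_pos hε.out (n : ℝ)
    calc |(x.1 ε)⁻¹| = |x.1 ε|⁻¹ := abs_inv _
      _ ≤ ε ^ (-(n : ℝ)) := by rw [Real.rpow_neg hε.out.le]; exact inv_anti₀ hpow hle
      _ < ε ^ (-(n : ℝ) - 1) := Real.rpow_lt_rpow_of_exponent_gt hε.out hε1.2 (by linarith)
  refine IsUnit.of_mul_eq_one (mkR ⟨_, hinv⟩) ?_
  rw [← mkR_mul, ← mkR_one, mkR_eq_mkR_iff]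
  refine negligible_of_eventually_eq_zero ?_
  filter_upwards [hne] with ε hε
  exact sub_eq_zero.2 (mul_inv_cancel₀ hε)

lemma frequently_abs_lt_pow_of_not_isUnit {x : EMring} (hx : ¬ IsUnit (mkR x)) (n : ℕ) :
    ∃ᶠ ε in 𝓝[>] (0 : ℝ), |x.1 ε| < ε ^ (n : ℝ) := by
  by_contra h
  simp only [Filter.not_frequently, not_lt] at h
  exact hx (isUnit_mkR_of_eventually_pow_le_abs x n h)

/-- The idempotent `e_S = [χ_S]`. -/
def chiQ (S : Set ℝ) : Rbar := mkR ⟨S.indicator fun _ => (1 : ℝ), chi_moderate S⟩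

lemma isIdempotentElem_chiQ (S : Set ℝ) : IsIdempotentElem (chiQ S) := by
  rw [IsIdempotentElem, chiQ, ← mkR_mul]
  congr 1
  ext ε
  by_cases h : ε ∈ S <;> simp [h]

lemma chiQ_ne_zero {S : Set ℝ} (hS : ∃ᶠ ε in 𝓝[>] (0 : ℝ), ε ∈ S) : chiQ S ≠ 0 := by
  rw [chiQ, Ne, mkR_eq_zero_iff]
  refine not_negligible_of_frequently_one_le_abs (hS.mono fun ε hε => ?_)
  simp [hε]

lemma chiQ_ne_one {S : Set ℝ} (hS : ∃ᶠ ε in 𝓝[>] (0 : ℝ), ε ∉ S) : chiQ S ≠ 1 := by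
  rw [chiQ, Ne, ← mkR_one, mkR_eq_mkR_iff]
  refine not_negligible_of_frequently_one_le_abs (hS.mono fun ε hε => ?_)
  simp [hε]

lemma chiQ_mul_mkR_eq_zero {S : Set ℝ} {x : EMring}
    (h : ∀ n : ℕ, ∀ᶠ ε in 𝓝[>] (0 : ℝ), ε ∈ S → |x.1 ε| < ε ^ (n : ℝ)) :
    chiQ S * mkR x = 0 := by
  rw [chiQ, ← mkR_mul, mkR_eq_zero_iff, negligible_iff]
  intro n
  filter_upwards [h n, self_mem_nhdsWithin] with ε hS hε
  by_cases hε' : ε ∈ S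
  · simpa [hε'] using hS hε'
  · simpa [hε'] using Real.rpow_pos_of_pos hε.out (n : ℝ)

lemma frequently_notMem_of_countable {S : Set ℝ} (hS : S.Countable) :
    ∃ᶠ ε in 𝓝[>] (0 : ℝ), ε ∉ S := by
  intro hSc
  obtain ⟨η, hη, hsub⟩ := mem_nhdsGT_iff_exists_Ioc_subset.1 hSc
  obtain ⟨ε, hεS, hε⟩ := (hS.dense_compl ℝ).exists_mem_open isOpen_Ioo (Set.nonempty_Ioo.2 hη)
  exact hεS (not_not.1 (hsub (Set.Ioo_subset_Ioc_self hε)))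

lemma exists_countable_frequently_mem_eventually_imp {P : ℕ → ℝ → Prop}
    (hP : ∀ k, ∃ᶠ ε in 𝓝[>] (0 : ℝ), P k ε) :
    ∃ S : Set ℝ, S.Countable ∧ (∃ᶠ ε in 𝓝[>] (0 : ℝ), ε ∈ S) ∧
      ∀ n : ℕ, ∀ᶠ ε in 𝓝[>] (0 : ℝ), ε ∈ S → ∃ k ≥ n, P k ε := by
  choose t ht using fun k : ℕ =>
    ((hP k).and_eventually (Ioo_mem_nhdsGT (Nat.one_div_pos_of_nat (n := k)))).exists
  have htend : Tendsto t atTop (𝓝[>] 0) := by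
    refine tendsto_nhdsWithin_iff.2 ⟨squeeze_zero (fun k => (ht k).2.1.le)
      (fun k => (ht k).2.2.le) tendsto_one_div_add_atTop_nhds_zero_nat,
      Eventually.of_forall fun k => (ht k).2.1⟩
  refine ⟨Set.range t, Set.countable_range t,
    htend.frequently (Frequently.of_forall Set.mem_range_self), fun n => ?_⟩
  have hlt : ∀ᶠ ε in 𝓝[>] (0 : ℝ), ∀ k ∈ Finset.range n, ε < t k :=
    (Finset.range n).eventually_all.2 fun k _ =>
      Filter.mem_of_superset (Ioo_mem_nhdsGT (ht k).2.1) fun _ hε => hε.2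
  filter_upwards [hlt] with ε hε
  rintro ⟨k, rfl⟩
  refine ⟨k, not_lt.1 fun hkn => ?_, (ht k).1⟩
  exact lt_irrefl _ (hε k (Finset.mem_range.2 hkn))

lemma exists_idempotent_mul_eq_zero_of_not_isUnit {x : Rbar} (hx : ¬ IsUnit x) :
    ∃ e : Rbar, IsIdempotentElem e ∧ e ≠ 0 ∧ e ≠ 1 ∧ e * x = 0 := by
  obtain ⟨x, rfl⟩ := mkR_surjective x
  obtain ⟨S, hSc, hS0, hSx⟩ :=
    exists_countable_frequently_mem_eventually_imp (frequently_abs_lt_pow_of_not_isUnit hx)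
  refine ⟨chiQ S, isIdempotentElem_chiQ S, chiQ_ne_zero hS0,
    chiQ_ne_one (frequently_notMem_of_countable hSc), chiQ_mul_mkR_eq_zero fun n => ?_⟩
  filter_upwards [hSx n, self_mem_nhdsWithin, Ioo_mem_nhdsGT one_pos] with ε hε hε0 hε1 hεS
  obtain ⟨k, hkn, hk⟩ := hε hεS
  exact hk.trans_le (Real.rpow_le_rpow_of_exponent_ge hε0.out hε1.2.le (by exact_mod_cast hkn))

/-- a nonzero element of `R̄` is either invertible or a zero divisor;
more precisely, a non-invertible element is annihilated by a nontrivial idempotent. -/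
theorem nonunit_killed_by_nontrivial_idempotent :
    (∀ x : Rbar, x ≠ 0 → ¬ IsUnit x →
      ∃ e : Rbar, e * e = e ∧ e ≠ 0 ∧ e ≠ 1 ∧ e * x = 0) ∧
    (∀ x : Rbar, x ≠ 0 → IsUnit x ∨ ∃ y : Rbar, y ≠ 0 ∧ y * x = 0) := by
  refine ⟨fun x _ hx => exists_idempotent_mul_eq_zero_of_not_isUnit hx, fun x _ => ?_⟩
  by_cases hx : IsUnit x
  · exact Or.inl hx
  · obtain ⟨e, -, he0, -, hex⟩ := exists_idempotent_mul_eq_zero_of_not_isUnit hx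
    exact Or.inr ⟨e, he0, hex⟩
end
end

section
/- Fix a real number r with 0 < r < 1. The hypersequence n ↦ r^n (n ∈ Ñ, where r^n = [ε ↦ r^{n_ε}]) converges to 0 in the sharp topology of R̄: for every t > 0, taking n₀ = [ε ↦ 2·⌊(t/|ln r|)·|ln ε|⌋ + 1] ∈ Ñ, every n ∈ Ñ with n > n₀ satisfies |r^n| < α^t. Moreover n₀ is moderate, with n₀ ≤ C·α^{−1} for some constant C. -/
noncomputable section

open Real

/-!
Since `r ^ n = exp (n log r)` and `ε ^ t = exp (t log ε)` with both logarithms negative,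
`r ^ n < ε ^ t` as soon as `n > (t / |log r|) |log ε|`, which every `n > n₀` satisfies.
The bound `|log ε| ≤ ε⁻¹` makes `n₀ = O(ε⁻¹)`, hence moderate.
-/

namespace SmallEv

theorem mono {P Q : ℝ → Prop} (h : SmallEv P) (hPQ : ∀ ε, 0 < ε → P ε → Q ε) : SmallEv Q := by
  obtain ⟨η, hη, hP⟩ := h
  exact ⟨η, hη, fun ε hε hεη => hPQ ε hε (hP ε hε hεη)⟩

theorem and {P Q : ℝ → Prop} (hP : SmallEv P) (hQ : SmallEv Q) :
    SmallEv fun ε => P ε ∧ Q ε := by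
  obtain ⟨η, hη, hP⟩ := hP
  obtain ⟨θ, hθ, hQ⟩ := hQ
  exact ⟨min η θ, lt_min hη hθ, fun ε hε hεle =>
    ⟨hP ε hε (hεle.trans (min_le_left _ _)), hQ ε hε (hεle.trans (min_le_right _ _))⟩⟩

end SmallEv

theorem smallEv_le_const {η : ℝ} (hη : 0 < η) : SmallEv fun ε => ε ≤ η :=
  ⟨η, hη, fun _ _ h => h⟩

theorem moderate_of_abs_le_mul_rpow {x : ℝ → ℝ} {C a : ℝ}
    (h : SmallEv fun ε => |x ε| ≤ C * ε ^ a) : Moderate x := by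
  refine ⟨a - 1, (h.and (smallEv_le_const (η := (|C| + 1)⁻¹) (by positivity))).mono ?_⟩
  rintro ε hε ⟨hx, hεC⟩
  have hC : |C| < ε⁻¹ := (lt_add_one _).trans_le ((le_inv_comm₀ hε (by positivity)).1 hεC)
  calc |x ε| ≤ C * ε ^ a := hx
    _ ≤ |C| * ε ^ a := by gcongr; exact le_abs_self C
    _ < ε⁻¹ * ε ^ a := by gcongr
    _ = ε ^ (a - 1) := by rw [rpow_sub hε, rpow_one, div_eq_inv_mul]

theorem abs_log_le_inv {ε : ℝ} (hε : 0 < ε) (hε1 : ε ≤ 1) : |log ε| ≤ ε⁻¹ := by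
  rw [abs_of_nonpos (log_nonpos hε.le hε1)]
  linarith [one_sub_inv_le_log_of_pos hε]

theorem two_mul_floor_mul_abs_log_add_one_le {q ε : ℝ} (hq : 0 ≤ q) (hε : 0 < ε) (hε1 : ε ≤ 1) :
    ((2 * ⌊q * |log ε|⌋₊ + 1 : ℕ) : ℝ) ≤ (2 * q + 1) * ε ^ (-1 : ℝ) := by
  have hfloor : (⌊q * |log ε|⌋₊ : ℝ) ≤ q * ε⁻¹ :=
    (Nat.floor_le (by positivity)).trans (mul_le_mul_of_nonneg_left (abs_log_le_inv hε hε1) hq)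
  have hone : (1 : ℝ) ≤ ε⁻¹ := one_le_inv₀ hε |>.2 hε1
  rw [rpow_neg_one]
  push_cast
  linarith

theorem rpow_div_abs_log_mul_abs_log {r ε : ℝ} (hr0 : 0 < r) (hr1 : r < 1) (hε : 0 < ε)
    (hε1 : ε ≤ 1) (t : ℝ) : r ^ (t / |log r| * |log ε|) = ε ^ t := by
  have hlogr : log r < 0 := log_neg hr0 hr1
  rw [rpow_def_of_pos hr0, rpow_def_of_pos hε, abs_of_neg hlogr,
    abs_of_nonpos (log_nonpos hε.le hε1)]
  have := hlogr.ne
  congr 1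
  field_simp

theorem pow_lt_rpow_of_div_abs_log_mul_abs_log_lt {r ε t : ℝ} {m : ℕ} (hr0 : 0 < r) (hr1 : r < 1)
    (hε : 0 < ε) (hε1 : ε ≤ 1) (hm : t / |log r| * |log ε| < m) : r ^ m < ε ^ t := by
  rw [← rpow_natCast, ← rpow_div_abs_log_mul_abs_log hr0 hr1 hε hε1 t]
  exact rpow_lt_rpow_of_exponent_gt hr0 hr1 hm

/-- for `0 < r < 1` the hypersequence `n ↦ r^n` converges to `0` in the
sharp topology, with explicit witness `n₀(ε) = 2⌊(t/|ln r|)·|ln ε|⌋ + 1`, and `n₀` is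
moderate with `n₀ ≤ C·α^{-1}`. -/
theorem hyperseq_geometric_tendsto_zero :
    ∀ r : ℝ, 0 < r → r < 1 → ∀ t : ℝ, 0 < t →
      -- `n₀` is a hypernatural
      (Moderate fun ε => ((2 * Nat.floor ((t / |Real.log r|) * |Real.log ε|) + 1 : ℕ) : ℝ)) ∧
      -- moderateness estimate `n₀ ≤ C · α^{-1}`
      (∃ C : ℝ, SmallEv fun ε =>
        ((2 * Nat.floor ((t / |Real.log r|) * |Real.log ε|) + 1 : ℕ) : ℝ) ≤ C * ε ^ (-1 : ℝ)) ∧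
      -- every hypernatural `n > n₀` satisfies `|r^n| < α^t`
      (∀ n : ℝ → ℕ, Moderate (fun ε => (n ε : ℝ)) →
        (SmallEv fun ε => 2 * Nat.floor ((t / |Real.log r|) * |Real.log ε|) + 1 < n ε) →
        SmallEv fun ε => |r ^ (n ε)| < ε ^ t) := by
  intro r hr0 hr1 t ht
  have hq : 0 ≤ t / |log r| := div_nonneg ht.le (abs_nonneg _)
  have hbound : SmallEv fun ε => ((2 * ⌊t / |log r| * |log ε|⌋₊ + 1 : ℕ) : ℝ) ≤
      (2 * (t / |log r|) + 1) * ε ^ (-1 : ℝ) :=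
    (smallEv_le_const one_pos).mono fun ε hε hε1 =>
      two_mul_floor_mul_abs_log_add_one_le hq hε hε1
  refine ⟨moderate_of_abs_le_mul_rpow (hbound.mono fun ε _ h => by rwa [Nat.abs_cast]),
    ⟨_, hbound⟩, ?_⟩
  rintro n - hn
  refine (hn.and (smallEv_le_const one_pos)).mono ?_
  rintro ε hε ⟨hnε, hε1⟩
  rw [abs_of_pos (pow_pos hr0 _)]
  exact pow_lt_rpow_of_div_abs_log_mul_abs_log_lt hr0 hr1 hε hε1 (Nat.lt_of_floor_lt (by omega))
end
end
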